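/- Let P_t be the heat semigroup of a finite weighted graph satisfying CD(K,n) with K>0, n<∞. Then for all f with Γ(f) ≤ 1 pointwise and all t > 0, |Δ P_t f| ≤ √(Kn)·(e^{2Kt} − 1)^{-1/2} pointwise. -/

import Mathlib

open scoped ENNReal

structure WGraph (V : Type*) where
  w : V → V → ℝ
  m : V → ℝ
  symm : ∀ x y, w x y = w y x
  nonneg : ∀ x y, 0 ≤ w x y
  loopless : ∀ x, w x x = 0
  mpos : ∀ x, 0 < m x
  locfin : ∀ x, {y | w x y ≠ 0}.Finite

variable {V : Type*}

noncomputable def WGraph.lap (G : WGraph V) (f : V → ℝ) (x : V) : ℝ :=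
  (1 / G.m x) * ∑' y, G.w x y * (f y - f x)

noncomputable def WGraph.gamma (G : WGraph V) (f g : V → ℝ) (x : V) : ℝ :=
  (G.lap (f * g) x - f x * G.lap g x - g x * G.lap f x) / 2

noncomputable def WGraph.gamma2 (G : WGraph V) (f : V → ℝ) (x : V) : ℝ :=
  (G.lap (G.gamma f f) x - 2 * G.gamma f (G.lap f) x) / 2

noncomputable def WGraph.deg (G : WGraph V) (x : V) : ℝ :=
  (∑' y, G.w x y) / G.m x

noncomputable def WGraph.cdist (G : WGraph V) (x y : V) : ℕ∞ :=
  ⨅ (n : ℕ) (_ : ∃ c : ℕ → V, c 0 = x ∧ c n = y ∧ ∀ i < n, 0 < G.w (c i) (c (i+1))), (n : ℕ∞)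

noncomputable def WGraph.rho (G : WGraph V) (x y : V) : ℝ≥0∞ :=
  ⨆ (f : V → ℝ) (_ : ∀ z, G.gamma f f z ≤ 1), ENNReal.ofReal (f y - f x)

noncomputable def WGraph.diamd (G : WGraph V) : ℝ≥0∞ := ⨆ x, ⨆ y, (G.cdist x y : ℝ≥0∞)

noncomputable def WGraph.diamrho (G : WGraph V) : ℝ≥0∞ := ⨆ x, ⨆ y, G.rho x y

def WGraph.Connected (G : WGraph V) : Prop :=
  ∀ x y, ∃ (n : ℕ) (c : ℕ → V), c 0 = x ∧ c n = y ∧ ∀ i < n, 0 < G.w (c i) (c (i+1))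

variable [Fintype V]

/-- The graph Laplacian as a linear map on functions (finite vertex set). -/
noncomputable def WGraph.lapL (G : WGraph V) : (V → ℝ) →ₗ[ℝ] (V → ℝ) where
  toFun f := G.lap f
  map_add' f g := by
    funext x
    simp only [WGraph.lap, tsum_fintype, Pi.add_apply]
    rw [← mul_add, ← Finset.sum_add_distrib]
    congr 1
    exact Finset.sum_congr rfl fun y _ => by ring
  map_smul' c f := by
    funext x
    simp only [WGraph.lap, tsum_fintype, Pi.smul_apply, smul_eq_mul, RingHom.id_apply]
    rw [Finset.mul_sum, Finset.mul_sum, Finset.mul_sum]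
    exact Finset.sum_congr rfl fun y _ => by ring

/-- The heat semigroup P_t = e^{tΔ} of a finite weighted graph. -/
noncomputable def WGraph.heat (G : WGraph V) (t : ℝ) (f : V → ℝ) : V → ℝ :=
  NormedSpace.exp (t • (LinearMap.toContinuousLinearMap G.lapL)) f

/-! For `0 ≤ s ≤ t` put `F s = P_s (Γ (P_{t-s} f)) x`. Differentiating gives
`F' s = 2 P_s (Γ₂ (P_{t-s} f)) x`, and `CD(K, n)` together with positivity of `P_s` and Jensen's
inequality `(P_s g)² ≤ P_s (g²)` yields `F' ≥ 2K F + (2/n) (Δ P_t f x)²`. Grönwall's inequality,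
`F 0 = Γ (P_t f) x ≥ 0` and `F t = P_t (Γ f) x ≤ 1` then give
`(Δ P_t f x)² (e^{2Kt} - 1) ≤ K n`. -/

theorem gronwallBound_neg (δ K ε x : ℝ) :
    gronwallBound (-δ) K (-ε) x = -gronwallBound δ K ε x := by
  unfold gronwallBound
  split_ifs <;> ring

theorem gronwallBound_le_of_deriv_right_ge {f f' : ℝ → ℝ} {δ K ε a b : ℝ}
    (hf : ContinuousOn f (Set.Icc a b))
    (hf' : ∀ x ∈ Set.Ico a b, HasDerivWithinAt f (f' x) (Set.Ici x) x)
    (ha : δ ≤ f a) (bound : ∀ x ∈ Set.Ico a b, K * f x + ε ≤ f' x) :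
    ∀ x ∈ Set.Icc a b, gronwallBound δ K ε (x - a) ≤ f x := by
  intro x hx
  have := le_gronwallBound_of_liminf_deriv_right_le (f := -f) (f' := -f') (δ := -δ) (K := K)
    (ε := -ε) hf.neg (fun x hx _ hr => (hf' x hx).neg.liminf_right_slope_le hr) (neg_le_neg ha)
    (fun x hx => by simp only [Pi.neg_apply]; linarith [bound x hx]) x hx
  rw [gronwallBound_neg] at this
  simpa using this

section
open NormedSpace
variable {ι : Type*} [Fintype ι]

theorem exp_apply_eq_self_of_apply_eq_zero {E : Type*} [NormedAddCommGroup E] [NormedSpace ℝ E]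
    [CompleteSpace E] {T : E →L[ℝ] E} {v : E} (hv : T v = 0) : exp T v = v := by
  rw [exp_eq_tsum ℝ, ← ContinuousLinearMap.apply_apply (v := v),
    ContinuousLinearMap.map_tsum _ (expSeries_summable' _), tsum_eq_single 0]
  · simp
  · intro k hk
    obtain ⟨j, rfl⟩ := Nat.exists_eq_succ_of_ne_zero hk
    simp [pow_succ, mul_apply_eq_comp, hv]

theorem exp_apply_nonneg_of_map_nonneg {T : (ι → ℝ) →L[ℝ] (ι → ℝ)}
    (hT : ∀ f, 0 ≤ f → 0 ≤ T f) {f : ι → ℝ} (hf : 0 ≤ f) : 0 ≤ exp T f := by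
  have hpow : ∀ k : ℕ, 0 ≤ (T ^ k) f := by
    intro k
    induction k with
    | zero => simpa using hf
    | succ k ih => rw [pow_succ', mul_apply_eq_comp]; exact hT _ ih
  rw [exp_eq_tsum ℝ, ← ContinuousLinearMap.apply_apply (v := f),
    ContinuousLinearMap.map_tsum _ (expSeries_summable' _)]
  exact tsum_nonneg fun k => by
    simpa using smul_nonneg (by positivity : (0:ℝ) ≤ (k.factorial : ℝ)⁻¹) (hpow k)

theorem exp_apply_nonneg_of_map_add_smul_one_nonneg {T : (ι → ℝ) →L[ℝ] (ι → ℝ)} (c : ℝ)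
    (hT : ∀ f, 0 ≤ f → 0 ≤ (T + c • 1) f) {f : ι → ℝ} (hf : 0 ≤ f) : 0 ≤ exp T f := by
  let : NormedAlgebra ℚ ((ι → ℝ) →L[ℝ] (ι → ℝ)) := NormedAlgebra.restrictScalars ℚ ℝ _
  have hsplit : exp T = Real.exp (-c) • exp (T + c • 1) := by
    have hc : Commute (-c • 1 : (ι → ℝ) →L[ℝ] (ι → ℝ)) (T + c • 1) :=
      (Commute.one_left _).smul_left _
    conv_lhs => rw [show T = -c • 1 + (T + c • 1) by module]
    rw [exp_add_of_commute hc,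
      ← Algebra.algebraMap_eq_smul_one, ← algebraMap_exp_comm, Real.exp_eq_exp_ℝ]
    exact (Algebra.smul_def _ _).symm
  rw [hsplit, smul_apply]
  exact smul_nonneg (Real.exp_pos _).le (exp_apply_nonneg_of_map_nonneg hT hf)
end

namespace WGraph
open NormedSpace
variable (G : WGraph V)

noncomputable def lapCLM : (V → ℝ) →L[ℝ] (V → ℝ) := LinearMap.toContinuousLinearMap G.lapL

def CD (K n : ℝ) : Prop :=
  ∀ (f : V → ℝ) (x : V), (1 / n) * (G.lap f x) ^ 2 + K * G.gamma f f x ≤ G.gamma2 f x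

theorem lapCLM_apply (f : V → ℝ) : G.lapCLM f = G.lap f := rfl

theorem heat_eq_exp_apply (t : ℝ) (f : V → ℝ) : G.heat t f = exp (t • G.lapCLM) f := rfl

theorem lap_eq_sum (f : V → ℝ) (x : V) :
    G.lap f x = (1 / G.m x) * ∑ y, G.w x y * (f y - f x) := by
  rw [WGraph.lap, tsum_fintype]

theorem gamma_eq_sum (f g : V → ℝ) (x : V) :
    G.gamma f g x = (∑ z, G.w x z * ((f z - f x) * (g z - g x))) / (2 * G.m x) := by
  have hm : G.m x ≠ 0 := (G.mpos x).ne'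
  have hsum : ∑ z, G.w x z * (f z * g z - f x * g x)
      - f x * ∑ z, G.w x z * (g z - g x) - g x * ∑ z, G.w x z * (f z - f x)
      = ∑ z, G.w x z * ((f z - f x) * (g z - g x)) := by
    rw [Finset.mul_sum, Finset.mul_sum, ← Finset.sum_sub_distrib, ← Finset.sum_sub_distrib]
    exact Finset.sum_congr rfl fun z _ => by ring
  simp only [WGraph.gamma, lap_eq_sum, Pi.mul_apply]
  rw [← hsum]
  field_simp

theorem gamma_self_nonneg (f : V → ℝ) : 0 ≤ G.gamma f f := fun x => by
  rw [gamma_eq_sum]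
  have := G.mpos x
  exact div_nonneg (Finset.sum_nonneg fun z _ => mul_nonneg (G.nonneg x z) (mul_self_nonneg _))
    (by positivity)

theorem gamma_eq_smul (f g : V → ℝ) :
    G.gamma f g = (2 : ℝ)⁻¹ • (G.lapCLM (f * g) - f * G.lapCLM g - g * G.lapCLM f) := by
  funext x
  simp only [WGraph.gamma, lapCLM_apply, Pi.smul_apply, Pi.sub_apply, Pi.mul_apply, smul_eq_mul]
  ring

theorem lapCLM_const (c : ℝ) : G.lapCLM (fun _ => c) = 0 := by
  funext x
  simp [lapCLM_apply, lap_eq_sum]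

theorem lap_add_mul_eq (c : ℝ) (f : V → ℝ) (x : V) :
    G.lap f x + c * f x = (1 / G.m x) * ∑ y, G.w x y * f y + (c - G.deg x) * f x := by
  have hm : G.m x ≠ 0 := (G.mpos x).ne'
  have hsplit : ∑ y, G.w x y * (f y - f x) = ∑ y, G.w x y * f y - (∑ y, G.w x y) * f x := by
    rw [Finset.sum_mul, ← Finset.sum_sub_distrib]
    exact Finset.sum_congr rfl fun y _ => by ring
  rw [lap_eq_sum, WGraph.deg, tsum_fintype, hsplit]
  field_simp
  ring

theorem deg_nonneg (x : V) : 0 ≤ G.deg x := by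
  rw [WGraph.deg, tsum_fintype]
  exact div_nonneg (Finset.sum_nonneg fun y _ => G.nonneg x y) (G.mpos x).le

theorem lapCLM_add_smul_one_nonneg {f : V → ℝ} (hf : 0 ≤ f) :
    0 ≤ (G.lapCLM + (∑ y, G.deg y) • 1) f := fun x => by
  have hdeg : G.deg x ≤ ∑ y, G.deg y :=
    Finset.single_le_sum (fun y _ => G.deg_nonneg y) (Finset.mem_univ x)
  simp only [add_apply, smul_apply, one_apply_eq_self,
    Pi.add_apply, Pi.smul_apply, smul_eq_mul, lapCLM_apply, lap_add_mul_eq]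
  have := G.mpos x
  exact add_nonneg
    (mul_nonneg (by positivity) (Finset.sum_nonneg fun y _ => mul_nonneg (G.nonneg x y) (hf y)))
    (mul_nonneg (sub_nonneg.mpr hdeg) (hf x))

theorem heat_nonneg {s : ℝ} (hs : 0 ≤ s) {f : V → ℝ} (hf : 0 ≤ f) : 0 ≤ G.heat s f := by
  refine exp_apply_nonneg_of_map_add_smul_one_nonneg (s * ∑ y, G.deg y) (fun g hg => ?_) hf
  rw [mul_smul, ← smul_add, smul_apply]
  exact smul_nonneg hs (G.lapCLM_add_smul_one_nonneg hg)

theorem heat_mono {s : ℝ} (hs : 0 ≤ s) {f g : V → ℝ} (hfg : f ≤ g) : G.heat s f ≤ G.heat s g := by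
  have := G.heat_nonneg hs (sub_nonneg.mpr hfg)
  rwa [heat_eq_exp_apply, map_sub, sub_nonneg] at this

theorem heat_const (s c : ℝ) : G.heat s (fun _ => c) = fun _ => c := by
  rw [heat_eq_exp_apply]
  exact exp_apply_eq_self_of_apply_eq_zero (by rw [smul_apply, lapCLM_const, smul_zero])

theorem heat_zero (f : V → ℝ) : G.heat 0 f = f := by
  rw [heat_eq_exp_apply, zero_smul, exp_zero, one_apply_eq_self]

theorem heat_heat (s u : ℝ) (f : V → ℝ) : G.heat s (G.heat u f) = G.heat (s + u) f := by
  let : NormedAlgebra ℚ ((V → ℝ) →L[ℝ] (V → ℝ)) := NormedAlgebra.restrictScalars ℚ ℝ _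
  have hc : Commute (s • G.lapCLM) (u • G.lapCLM) := ((Commute.refl _).smul_left s).smul_right u
  rw [heat_eq_exp_apply, heat_eq_exp_apply, heat_eq_exp_apply, add_smul, exp_add_of_commute hc,
    mul_apply_eq_comp]

theorem heat_lap (s : ℝ) (f : V → ℝ) : G.heat s (G.lap f) = G.lap (G.heat s f) := by
  have hc : Commute (exp (s • G.lapCLM)) G.lapCLM := ((Commute.refl _).smul_left s).exp_left
  rw [heat_eq_exp_apply, heat_eq_exp_apply, ← lapCLM_apply, ← lapCLM_apply, ← mul_apply_eq_comp,
    hc.eq, mul_apply_eq_comp]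

theorem sq_heat_le_heat_sq {s : ℝ} (hs : 0 ≤ s) (f : V → ℝ) :
    G.heat s f ^ 2 ≤ G.heat s (f ^ 2) := fun x => by
  set c := G.heat s f x
  have hexpand : (fun y => (f y - c) ^ 2) = f ^ 2 - (2 * c) • f + fun _ => c ^ 2 := by
    funext y
    simp only [Pi.pow_apply, Pi.sub_apply, Pi.add_apply, Pi.smul_apply, smul_eq_mul]
    ring
  have h := G.heat_nonneg hs (fun y => sq_nonneg (f y - c)) x
  rw [hexpand, heat_eq_exp_apply, map_add, map_sub, map_smul, ← heat_eq_exp_apply,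
    ← heat_eq_exp_apply, ← heat_eq_exp_apply, heat_const] at h
  simp only [Pi.add_apply, Pi.sub_apply, Pi.smul_apply, smul_eq_mul, Pi.zero_apply] at h
  simp only [Pi.pow_apply]
  nlinarith [h]

theorem hasDerivAt_heat_sub (f : V → ℝ) (t s : ℝ) :
    HasDerivAt (fun r => G.heat (t - r) f) (-G.lap (G.heat (t - s) f)) s := by
  have hexp := (hasDerivAt_exp_smul_const' (𝕂 := ℝ) G.lapCLM (t - s)).scomp s
    ((hasDerivAt_id s).const_sub t)
  refine (hexp.clm_apply (hasDerivAt_const s f)).congr_deriv ?_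
  simp [heat_eq_exp_apply, mul_apply_eq_comp, lapCLM_apply]

theorem hasDerivAt_gamma_self {u : ℝ → V → ℝ} {u' : V → ℝ} {s : ℝ} (hu : HasDerivAt u u' s) :
    HasDerivAt (fun r => G.gamma (u r) (u r)) ((2 : ℝ) • G.gamma (u s) u') s := by
  simp only [gamma_eq_smul]
  have hlap := fun {v : ℝ → V → ℝ} {v' : V → ℝ} (hv : HasDerivAt v v' s) =>
    G.lapCLM.hasFDerivAt.comp_hasDerivAt s hv
  refine ((((hlap (hu.mul hu)).sub (hu.mul (hlap hu))).sub (hu.mul (hlap hu))).const_smul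
    (2 : ℝ)⁻¹).congr_deriv ?_
  funext x
  simp only [Pi.smul_apply, Pi.sub_apply, Pi.add_apply, Pi.mul_apply, smul_eq_mul,
    Function.comp_apply, map_add, mul_comm u' (u s)]
  ring

theorem gamma_neg_right (f g : V → ℝ) : G.gamma f (-g) = -G.gamma f g := by
  simp only [gamma_eq_smul, mul_neg, map_neg, neg_mul]
  module

theorem two_smul_gamma2 (f : V → ℝ) :
    (2 : ℝ) • G.gamma2 f = G.lap (G.gamma f f) + (2 : ℝ) • G.gamma f (-G.lap f) := by
  funext x
  simp only [gamma_neg_right, WGraph.gamma2, Pi.smul_apply, Pi.add_apply, Pi.neg_apply,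
    smul_eq_mul]
  ring

theorem hasDerivAt_heat_gamma_heat_sub (f : V → ℝ) (t s : ℝ) (x : V) :
    HasDerivAt (fun r => G.heat r (G.gamma (G.heat (t - r) f) (G.heat (t - r) f)) x)
      (2 * G.heat s (G.gamma2 (G.heat (t - s) f)) x) s := by
  have hΓ := G.hasDerivAt_gamma_self (G.hasDerivAt_heat_sub f t s)
  have hP := (hasDerivAt_exp_smul_const (𝕂 := ℝ) G.lapCLM s).clm_apply hΓ
  refine (hasDerivAt_pi.1 hP x).congr_deriv ?_
  set u := G.heat (t - s) f
  have hval : (exp (s • G.lapCLM) * G.lapCLM) (G.gamma u u)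
      + exp (s • G.lapCLM) ((2 : ℝ) • G.gamma u (-G.lap u))
      = (2 : ℝ) • G.heat s (G.gamma2 u) := by
    rw [heat_eq_exp_apply, ← map_smul (exp (s • G.lapCLM)), two_smul_gamma2, map_add,
      mul_apply_eq_comp, lapCLM_apply]
  rw [hval]
  rfl

variable {G}

theorem CD.sq_lap_heat_add_heat_gamma_le {K n : ℝ} (hCD : G.CD K n) (hn : 0 ≤ n) {s : ℝ}
    (hs : 0 ≤ s) (f : V → ℝ) (x : V) :
    1 / n * G.lap (G.heat s f) x ^ 2 + K * G.heat s (G.gamma f f) x ≤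
      G.heat s (G.gamma2 f) x := by
  have hCD' : (1 / n) • G.lap f ^ 2 + K • G.gamma f f ≤ G.gamma2 f := fun y => hCD f y
  have hjensen := G.sq_heat_le_heat_sq hs (G.lap f) x
  rw [heat_lap] at hjensen
  calc (1 / n) * G.lap (G.heat s f) x ^ 2 + K * G.heat s (G.gamma f f) x
      ≤ (1 / n) * G.heat s (G.lap f ^ 2) x + K * G.heat s (G.gamma f f) x := by
        gcongr
        exact hjensen
    _ = G.heat s ((1 / n) • G.lap f ^ 2 + K • G.gamma f f) x := by
        simp only [heat_eq_exp_apply, map_add, map_smul, Pi.add_apply, Pi.smul_apply, smul_eq_mul]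
    _ ≤ G.heat s (G.gamma2 f) x := G.heat_mono hs hCD' x

theorem CD.sq_lap_heat_mul_le {K n : ℝ} (hCD : G.CD K n) (hK : 0 < K) (hn : 0 < n)
    {f : V → ℝ} (hf : G.gamma f f ≤ 1) {t : ℝ} (ht : 0 ≤ t) (x : V) :
    G.lap (G.heat t f) x ^ 2 * (Real.exp (2 * K * t) - 1) ≤ K * n := by
  set C := G.lap (G.heat t f) x ^ 2
  set F : ℝ → ℝ := fun r => G.heat r (G.gamma (G.heat (t - r) f) (G.heat (t - r) f)) x
  have hF' := G.hasDerivAt_heat_gamma_heat_sub f t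
  have hF_bound : ∀ r ∈ Set.Ico 0 t,
      (2 * K) * F r + (2 / n) * C ≤ 2 * G.heat r (G.gamma2 (G.heat (t - r) f)) x := by
    intro r hr
    have h := hCD.sq_lap_heat_add_heat_gamma_le hn.le hr.1 (G.heat (t - r) f) x
    rw [heat_heat, add_sub_cancel] at h
    linear_combination 2 * h
  have hF0 : 0 ≤ F 0 := G.heat_nonneg le_rfl (G.gamma_self_nonneg _) x
  have hFt : F t ≤ 1 := by
    dsimp only [F]
    rw [sub_self, heat_zero]
    simpa only [Pi.one_def, heat_const] using G.heat_mono ht hf x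
  have hgronwall := gronwallBound_le_of_deriv_right_ge
    (fun r _ => (hF' r x).continuousAt.continuousWithinAt)
    (fun r _ => (hF' r x).hasDerivWithinAt) hF0 hF_bound t (Set.right_mem_Icc.2 ht)
  rw [sub_zero, gronwallBound_of_K_ne_0 (by positivity)] at hgronwall
  calc C * (Real.exp (2 * K * t) - 1)
      = K * n * (0 * Real.exp (2 * K * t)
          + 2 / n * C / (2 * K) * (Real.exp (2 * K * t) - 1)) := by
        field_simp
        ring
    _ ≤ K * n * 1 := by gcongr; exact hgronwall.trans hFt
    _ = K * n := mul_one _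

end WGraph

/-- on a finite weighted graph satisfying CD(K,n) with K>0, n<∞,
if Γ(f) ≤ 1 pointwise then |Δ P_t f| ≤ √(Kn)·(e^{2Kt}-1)^{-1/2} for t > 0. -/
theorem lap_heat_bound_of_CDn (G : WGraph V) (K n : ℝ) (hK : 0 < K) (hn : 0 < n)
    (hCD : ∀ (f : V → ℝ) (x : V),
      (1 / n) * (G.lap f x) ^ 2 + K * G.gamma f f x ≤ G.gamma2 f x)
    (f : V → ℝ) (hf : ∀ z, G.gamma f f z ≤ 1) (t : ℝ) (ht : 0 < t) (x : V) :
    |G.lap (G.heat t f) x| ≤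
      Real.sqrt (K * n) * (Real.sqrt (Real.exp (2 * K * t) - 1))⁻¹ := by
  have hE : 0 < Real.exp (2 * K * t) - 1 := by
    rw [sub_pos, Real.one_lt_exp_iff]
    positivity
  have h := WGraph.CD.sq_lap_heat_mul_le hCD hK hn hf ht.le x
  rw [← div_eq_mul_inv, ← Real.sqrt_div (by positivity)]
  exact Real.abs_le_sqrt ((le_div_iff₀ hE).2 h)
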